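/- arXiv:1908.08598 — 4 statements merged into one kernel-verified Lean document; each statement's English description precedes it below -/
import Mathlib

section
/- For the function G(t,s) defined piecewise by G(t,s) = (1/6)(t³(1-s)² − (t−s)³) for 0 ≤ s ≤ t ≤ 1 and G(t,s) = (1/6)t³(1-s)² for 0 ≤ t ≤ s ≤ 1, we have G(t,s) ≥ 0 for all t, s ∈ [0,1]. -/
open Set intervalIntegral Filter

noncomputable def G (t s : ℝ) : ℝ :=
  if s ≤ t then (t^3*(1-s)^2 - (t-s)^3)/6 else t^3*(1-s)^2/6

noncomputable def e (s : ℝ) : ℝ := s*(1-s)^2/6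

noncomputable def H (α k : ℝ) {n : ℕ} (β η : Fin n → ℝ) (t s : ℝ) : ℝ :=
  G t s + (α/k) * (∫ τ in (0:ℝ)..1, G τ s) + (1/k) * ∑ i, β i * G (η i) s

lemma sub_le_mul_one_sub {t s : ℝ} (hs : 0 ≤ s) (ht : t ≤ 1) : t - s ≤ t * (1 - s) := by
  have : 0 ≤ s * (1 - t) := mul_nonneg hs (sub_nonneg.2 ht)
  linarith

lemma sub_pow_three_le_pow_three_mul_one_sub_sq {t s : ℝ} (hs : 0 ≤ s) (hst : s ≤ t)
    (ht : t ≤ 1) : (t - s) ^ 3 ≤ t ^ 3 * (1 - s) ^ 2 := by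
  have ht0 : 0 ≤ t := hs.trans hst
  calc (t - s) ^ 3 ≤ (t * (1 - s)) ^ 3 :=
        pow_le_pow_left₀ (sub_nonneg.2 hst) (sub_le_mul_one_sub hs ht) 3
    _ = t ^ 3 * (1 - s) ^ 2 * (1 - s) := by ring
    _ ≤ t ^ 3 * (1 - s) ^ 2 := mul_le_of_le_one_right (by positivity) (by linarith)

theorem stmt0 : ∀ t ∈ Set.Icc (0:ℝ) 1, ∀ s ∈ Set.Icc (0:ℝ) 1, 0 ≤ G t s := by
  rintro t ⟨ht0, ht1⟩ s ⟨hs0, -⟩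
  unfold G
  split_ifs with hst
  · linarith [sub_pow_three_le_pow_three_mul_one_sub_sq hs0 hst ht1]
  · positivity
end

section
/- For all (t,s) ∈ [0,1] × [0,1], the Green's function G satisfies G(t,s) ≤ e(s), where e(s) = (1/6)s(1−s)². -/
open Set intervalIntegral Filter

/-! For `s ≤ t`, the cubic `t ↦ 6 (e s - G t s)` has a double root at `t = 1`, so it factors as
`s (1 - t)²` times a linear factor that is at least `1 - s²` on `s ≤ t`. For `t < s`, the difference
is a nonnegative multiple of `s - t³ ≥ s - t > 0`. -/

lemma e_sub_G_of_le {t s : ℝ} (h : s ≤ t) :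
    e s - G t s = s * (1 - t) ^ 2 * ((2 - s) * (t - s) + (1 - s) * (1 + s)) / 6 := by
  rw [G, if_pos h, e]
  ring

lemma e_sub_G_of_lt {t s : ℝ} (h : t < s) : e s - G t s = (s - t ^ 3) * (1 - s) ^ 2 / 6 := by
  rw [G, if_neg h.not_ge, e]
  ring

theorem stmt1 : ∀ t ∈ Set.Icc (0:ℝ) 1, ∀ s ∈ Set.Icc (0:ℝ) 1, G t s ≤ e s := by
  rintro t ⟨ht0, ht1⟩ s ⟨hs0, hs1⟩
  rw [← sub_nonneg]
  rcases le_or_gt s t with hst | hts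
  · rw [e_sub_G_of_le hst]
    have : 0 ≤ (2 - s) * (t - s) + (1 - s) * (1 + s) := by
      apply add_nonneg <;> apply mul_nonneg <;> linarith
    positivity
  · rw [e_sub_G_of_lt hts]
    have : 0 ≤ s - t ^ 3 := sub_nonneg.2 ((pow_le_of_le_one ht0 ht1 three_ne_zero).trans hts.le)
    positivity
end

section
/- For all (t,s) ∈ [0,1] × [0,1], the Green's function G satisfies G(t,s) ≥ ρ(t)·e(s), where e(s) = (1/6)s(1−s)² and ρ(t) = min{t³, t²(1−t)}. -/
open Set intervalIntegral Filter

/-!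
For `t < s` the bound `t³ e(s) ≤ G(t,s)` is just `s ≤ 1`. For `s ≤ t` one has
`6 (G(t,s) - t²(1-t) e(s)) = t²(1-s)² (s t + (t-s)) - (t-s)³`, which is nonnegative because
`0 ≤ t - s ≤ t (1-s)`.
-/

lemma e_nonneg {s : ℝ} (hs : 0 ≤ s) : 0 ≤ e s := by
  unfold e
  positivity

lemma pow_three_mul_e_le_G {t s : ℝ} (ht : 0 ≤ t) (hs : s ≤ 1) (hts : t < s) :
    t^3 * e s ≤ G t s := by
  rw [G, if_neg (not_le.2 hts), e]
  have : s * (1-s)^2 ≤ (1-s)^2 := mul_le_of_le_one_left (sq_nonneg _) hs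
  have := mul_le_mul_of_nonneg_left this (pow_nonneg ht 3)
  linarith

lemma sq_mul_one_sub_mul_e_le_G {t s : ℝ} (hs : 0 ≤ s) (ht : t ≤ 1) (hst : s ≤ t) :
    t^2 * (1-t) * e s ≤ G t s := by
  have key : G t s - t^2 * (1-t) * e s = (t^2 * (1-s)^2 * (s*t + (t-s)) - (t-s)^3) / 6 := by
    rw [G, if_pos hst, e]
    ring
  have hu : 0 ≤ t - s := sub_nonneg.2 hst
  have hu_le : t - s ≤ t * (1-s) := by nlinarith
  have hu_sq : (t-s)^2 ≤ t^2 * (1-s)^2 := by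
    rw [← mul_pow]
    exact pow_le_pow_left₀ hu hu_le 2
  have : (t-s)^3 ≤ t^2 * (1-s)^2 * (s*t + (t-s)) :=
    calc (t-s)^3 = (t-s)^2 * (t-s) := by ring
      _ ≤ t^2 * (1-s)^2 * (t-s) := mul_le_mul_of_nonneg_right hu_sq hu
      _ ≤ t^2 * (1-s)^2 * (s*t + (t-s)) :=
        mul_le_mul_of_nonneg_left (by nlinarith) (by positivity)
  linarith

theorem stmt2 : ∀ t ∈ Set.Icc (0:ℝ) 1, ∀ s ∈ Set.Icc (0:ℝ) 1,
    min (t^3) (t^2*(1-t)) * e s ≤ G t s := by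
  rintro t ⟨ht0, ht1⟩ s ⟨hs0, hs1⟩
  rcases lt_or_ge t s with hts | hst
  · calc min (t^3) (t^2*(1-t)) * e s ≤ t^3 * e s :=
          mul_le_mul_of_nonneg_right (min_le_left _ _) (e_nonneg hs0)
      _ ≤ G t s := pow_three_mul_e_le_G ht0 hs1 hts
  · calc min (t^3) (t^2*(1-t)) * e s ≤ t^2 * (1-t) * e s :=
          mul_le_mul_of_nonneg_right (min_le_right _ _) (e_nonneg hs0)
      _ ≤ G t s := sq_mul_one_sub_mul_e_le_G hs0 ht1 hst
end

section
/- Let y ∈ C([0,1], [0,∞)), α ≥ 0, βᵢ ≥ 0 with 0 < η₁ < ... < ηₙ < 1 and k := 1 − (α + Σᵢ βᵢ) > 0, and let u(t) = ∫₀¹ H(t,s) y(s) ds. Then for all t ∈ [0,1], u(t) ≤ ∫₀¹ ((1 + α/k) e(s) + (1/k)Σᵢ βᵢ G(ηᵢ,s)) y(s) ds, where e(s) = (1/6)s(1−s)². -/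
/-! Since `G t s ≤ e s` for all `t, s ∈ [0,1]`, also `∫₀¹ G(τ,s) dτ ≤ e s`, so for `α/k ≥ 0` the
kernel satisfies `H(t,s) ≤ (1 + α/k) e(s) + (1/k) Σᵢ βᵢ G(ηᵢ,s)` pointwise (the `β`-terms agree on
both sides). Integrating against `y ≥ 0` gives the bound. -/

open Set intervalIntegral Filter

lemma continuous_uncurry_G : Continuous (Function.uncurry G) :=
  Continuous.if_le (by fun_prop) (by fun_prop) continuous_snd continuous_fst
    fun p h => by rw [h]; ring

lemma continuous_integral_G : Continuous fun s => ∫ τ in (0:ℝ)..1, G τ s :=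
  continuous_parametric_intervalIntegral_of_continuous' (f := fun s τ => G τ s)
    (continuous_uncurry_G.comp continuous_swap) 0 1

@[fun_prop]
lemma continuous_G (t : ℝ) : Continuous (G t) :=
  continuous_uncurry_G.comp (continuous_const.prodMk continuous_id)

lemma continuous_H (α k : ℝ) {n : ℕ} (β η : Fin n → ℝ) (t : ℝ) :
    Continuous fun s => H α k β η t s := by
  have := continuous_integral_G
  unfold H
  fun_prop

lemma G_le_e {t s : ℝ} (ht : t ∈ Icc (0:ℝ) 1) (hs : s ∈ Icc (0:ℝ) 1) : G t s ≤ e s := by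
  obtain ⟨ht0, ht1⟩ := ht
  obtain ⟨hs0, hs1⟩ := hs
  unfold G e
  split_ifs with hst
  · have hgap : s*(1-s)^2/6 - (t^3*(1-s)^2 - (t-s)^3)/6
        = s * (1-t)^2 * ((1+t)*(1-s) + (t-s)) / 6 := by ring
    have : 0 ≤ s * (1-t)^2 * ((1+t)*(1-s) + (t-s)) := by
      apply mul_nonneg (by positivity); nlinarith
    linarith
  · have hts : t^3 ≤ s := by
      calc t^3 ≤ t := pow_le_of_le_one ht0 ht1 (by norm_num)
        _ ≤ s := (not_le.mp hst).le
    have := mul_le_mul_of_nonneg_right hts (sq_nonneg (1-s))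
    linarith

lemma integral_G_le_e {s : ℝ} (hs : s ∈ Icc (0:ℝ) 1) : (∫ τ in (0:ℝ)..1, G τ s) ≤ e s := by
  have hG : Continuous fun τ => G τ s :=
    continuous_uncurry_G.comp (continuous_id.prodMk continuous_const)
  simpa using integral_mono_on zero_le_one (hG.intervalIntegrable 0 1)
    (intervalIntegrable_const (μ := MeasureTheory.volume)) fun τ hτ => G_le_e hτ hs

lemma H_le {α k : ℝ} (hαk : 0 ≤ α / k) {n : ℕ} (β η : Fin n → ℝ) {t s : ℝ}
    (ht : t ∈ Icc (0:ℝ) 1) (hs : s ∈ Icc (0:ℝ) 1) :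
    H α k β η t s ≤ (1 + α/k) * e s + (1/k) * ∑ i, β i * G (η i) s := by
  have := mul_le_mul_of_nonneg_left (integral_G_le_e hs) hαk
  unfold H
  linarith [G_le_e ht hs]

theorem stmt7_general (n : ℕ) (α : ℝ) (β η : Fin n → ℝ)
    (hα : 0 ≤ α)
    (k : ℝ) (hk0 : 0 < k)
    (y : ℝ → ℝ) (hy : ContinuousOn y (Set.Icc 0 1))
    (hynn : ∀ t ∈ Set.Icc (0:ℝ) 1, 0 ≤ y t)
    (u : ℝ → ℝ) (hu : ∀ t, u t = ∫ s in (0:ℝ)..1, H α k β η t s * y s) :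
    ∀ t ∈ Set.Icc (0:ℝ) 1,
      u t ≤ ∫ s in (0:ℝ)..1,
        ((1 + α/k) * e s + (1/k) * ∑ i, β i * G (η i) s) * y s := by
  intro t ht
  have hbound : Continuous fun s => (1 + α/k) * e s + (1/k) * ∑ i, β i * G (η i) s := by
    unfold e
    fun_prop
  rw [hu]
  refine integral_mono_on zero_le_one
    (((continuous_H α k β η t).continuousOn.mul hy).intervalIntegrable_of_Icc zero_le_one)
    ((hbound.continuousOn.mul hy).intervalIntegrable_of_Icc zero_le_one) fun s hs => ?_
  exact mul_le_mul_of_nonneg_right (H_le (div_nonneg hα hk0.le) β η ht hs) (hynn s hs)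

theorem stmt7 (n : ℕ) (α : ℝ) (β η : Fin n → ℝ)
    (hα : 0 ≤ α) (hβ : ∀ i, 0 ≤ β i)
    (hηmono : StrictMono η) (hη : ∀ i, η i ∈ Set.Ioo (0:ℝ) 1)
    (k : ℝ) (hk : k = 1 - (α + ∑ i, β i)) (hk0 : 0 < k)
    (y : ℝ → ℝ) (hy : ContinuousOn y (Set.Icc 0 1))
    (hynn : ∀ t ∈ Set.Icc (0:ℝ) 1, 0 ≤ y t)
    (u : ℝ → ℝ) (hu : ∀ t, u t = ∫ s in (0:ℝ)..1, H α k β η t s * y s) :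
    ∀ t ∈ Set.Icc (0:ℝ) 1,
      u t ≤ ∫ s in (0:ℝ)..1,
        ((1 + α/k) * e s + (1/k) * ∑ i, β i * G (η i) s) * y s :=
  stmt7_general n α β η hα k hk0 y hy hynn u hu
end
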